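/- Let {Aᵢ}ᵢ₌₁ⁿ be disjoint annuli Aᵢ = {rᵢ < |x − cᵢ| ≤ sᵢ} ⊂ ℝ² whose radii satisfy r₁ < s₁ ≤ r₂ < s₂ ≤ … ≤ rₙ < sₙ (so they can be arranged concentrically without overlap). Let f(x) = Σᵢ χ_{Aᵢ}(x) vᵢ(x) aᵢ/|x − cᵢ| with |vᵢ| = 1 on Aᵢ and constants aᵢ satisfying |aᵢ| ≤ |a|. Then for all t > 0, t² λ_f(t) ≤ π a². -/

import Mathlib

open Function MeasureTheory Metric Set

/-!
On `Aᵢ` only the `i`-th summand of `f` survives, so `|f x| = |aᵢ| / |x - cᵢ|` there, and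
`{|f| > t}` meets `Aᵢ` only inside the disc of radius `|a| / t` about `cᵢ`. Translating each piece
`Aᵢ ∩ B(cᵢ, |a| / t)` to the origin preserves its area, and the interleaving `sᵢ ≤ rⱼ` makes the
translated pieces disjoint subsets of the single disc `B(0, |a| / t)`, of area `π a² / t²`.
-/

def annulus {E : Type*} [PseudoMetricSpace E] (c : E) (r s : ℝ) : Set E :=
  {x | r < dist x c ∧ dist x c ≤ s}

section Indicator

variable {ι α M : Type*} [Fintype ι] {A : ι → Set α}

lemma sum_indicator_apply_of_mem [AddCommMonoid M] (hA : Pairwise (Disjoint on A))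
    (g : ι → α → M) {i : ι} {x : α} (hx : x ∈ A i) :
    ∑ j, (A j).indicator (g j) x = g i x := by
  rw [Finset.sum_eq_single i (fun j _ hji => indicator_of_notMem
      (fun hxj => (hA hji).le_bot ⟨hxj, hx⟩) _) (by simp), indicator_of_mem hx]

lemma setOf_lt_norm_sum_indicator_subset [SeminormedAddCommGroup M]
    (hA : Pairwise (Disjoint on A)) (g : ι → α → M) {t : ℝ} (ht : 0 ≤ t) :
    {x | t < ‖∑ j, (A j).indicator (g j) x‖} ⊆ ⋃ i, A i ∩ {x | t < ‖g i x‖} := by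
  intro x (hx : t < ‖_‖)
  by_cases hmem : ∃ i, x ∈ A i
  · obtain ⟨i, hi⟩ := hmem
    rw [sum_indicator_apply_of_mem hA g hi] at hx
    exact mem_iUnion.2 ⟨i, hi, hx⟩
  · push Not at hmem
    have hzero : ∑ j, (A j).indicator (g j) x = 0 :=
      Finset.sum_eq_zero fun j _ => indicator_of_notMem (hmem j) _
    rw [hzero, norm_zero] at hx
    exact absurd hx ht.not_gt

end Indicator

lemma mem_ball_of_lt_norm_div_dist_smul {X E : Type*} [PseudoMetricSpace X]
    [SeminormedAddCommGroup E] [NormedSpace ℝ E] {x c : X} {v : E} (hv : ‖v‖ = 1)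
    {a b t : ℝ} (hab : |a| ≤ |b|) (ht : 0 < t) (hx : t < ‖(a / dist x c) • v‖) :
    x ∈ ball c (|b| / t) := by
  rw [norm_smul, hv, mul_one, norm_div, Real.norm_eq_abs, Real.norm_eq_abs, abs_dist] at hx
  have hd : 0 < dist x c := by
    refine dist_nonneg.lt_of_ne fun h => ?_
    rw [← h, div_zero] at hx
    exact ht.not_gt hx
  rw [mem_ball, lt_div_iff₀ ht]
  rw [lt_div_iff₀ hd] at hx
  linarith

lemma measure_setOf_dist_eq {E : Type*} [SeminormedAddCommGroup E] [MeasurableSpace E]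
    [MeasurableAdd E] (μ : Measure E) [μ.IsAddRightInvariant] (c : E) (P : ℝ → Prop) :
    μ {x | P (dist x c)} = μ {y | P ‖y‖} := by
  have hpre : {x | P (dist x c)} = (· + -c) ⁻¹' {y | P ‖y‖} := by
    ext x
    simp [dist_eq_norm, sub_eq_add_neg]
  rw [hpre, measure_preimage_add_right]

lemma sum_measure_le_of_pairwise_disjoint {ι α : Type*} [Fintype ι] [MeasurableSpace α]
    (μ : Measure α) {T : ι → Set α} {S : Set α} (hT : ∀ i, MeasurableSet (T i))
    (hdisj : Pairwise (Disjoint on T)) (hTS : ∀ i, T i ⊆ S) :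
    ∑ i, μ (T i) ≤ μ S := by
  calc ∑ i, μ (T i) = μ (⋃ i, T i) := by rw [measure_iUnion hdisj hT, tsum_fintype]
    _ ≤ μ S := measure_mono (iUnion_subset hTS)

lemma sum_measure_annulus_inter_ball_le {ι E : Type*} [Fintype ι] [LinearOrder ι]
    [NormedAddCommGroup E] [MeasurableSpace E] [BorelSpace E] (μ : Measure E)
    [μ.IsAddRightInvariant] (c : ι → E) {r s : ι → ℝ} (hchain : ∀ i j, i < j → s i ≤ r j)
    (ρ : ℝ) :
    ∑ i, μ (annulus (c i) (r i) (s i) ∩ ball (c i) ρ) ≤ μ (ball 0 ρ) := by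
  have htranslate : ∀ i, μ (annulus (c i) (r i) (s i) ∩ ball (c i) ρ) =
      μ {y | (r i < ‖y‖ ∧ ‖y‖ ≤ s i) ∧ ‖y‖ < ρ} := fun i =>
    measure_setOf_dist_eq μ (c i) fun d => (r i < d ∧ d ≤ s i) ∧ d < ρ
  simp_rw [htranslate]
  refine sum_measure_le_of_pairwise_disjoint μ (fun i => ?_) ?_ fun i y hy => ?_
  · exact ((measurableSet_lt measurable_const measurable_norm).inter
      (measurableSet_le measurable_norm measurable_const)).inter
      (measurableSet_lt measurable_norm measurable_const)
  · intro i j hij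
    refine Set.disjoint_left.2 fun y hi hj => ?_
    rcases hij.lt_or_gt with h | h
    · linarith [hi.1.2, hj.1.1, hchain i j h]
    · linarith [hi.1.1, hj.1.2, hchain j i h]
  · exact mem_ball_zero_iff.2 hy.2

theorem concentric_annuli_distribution_estimate_general {n k : ℕ}
    (c : Fin n → EuclideanSpace ℝ (Fin 2)) (r s : Fin n → ℝ) (aa : ℝ) (a : Fin n → ℝ)
    (v : Fin n → EuclideanSpace ℝ (Fin 2) → EuclideanSpace ℝ (Fin k))
    (hchain : ∀ i j : Fin n, i < j → s i ≤ r j)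
    (hdisj : Pairwise (Function.onFun Disjoint
      (fun i => {x : EuclideanSpace ℝ (Fin 2) | r i < dist x (c i) ∧ dist x (c i) ≤ s i})))
    (hv : ∀ i, ∀ x ∈ {x : EuclideanSpace ℝ (Fin 2) |
        r i < dist x (c i) ∧ dist x (c i) ≤ s i}, ‖v i x‖ = 1)
    (ha : ∀ i, |a i| ≤ |aa|)
    (f : EuclideanSpace ℝ (Fin 2) → EuclideanSpace ℝ (Fin k))
    (hf : f = fun x => ∑ i, Set.indicator
        {y : EuclideanSpace ℝ (Fin 2) | r i < dist y (c i) ∧ dist y (c i) ≤ s i}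
        (fun y => (a i / dist y (c i)) • v i y) x) :
    ∀ t : ℝ, 0 < t →
      ENNReal.ofReal (t ^ 2) * volume {x | t < ‖f x‖} ≤
        ENNReal.ofReal (Real.pi * aa ^ 2) := by
  intro t ht
  have hsub : {x | t < ‖f x‖} ⊆ ⋃ i, annulus (c i) (r i) (s i) ∩ ball (c i) (|aa| / t) := by
    subst hf
    refine (setOf_lt_norm_sum_indicator_subset hdisj _ ht.le).trans (iUnion_mono fun i => ?_)
    rintro x ⟨hx, hlt⟩
    exact ⟨hx, mem_ball_of_lt_norm_div_dist_smul (hv i x hx) (ha i) ht hlt⟩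
  have hvol : volume {x | t < ‖f x‖} ≤ ENNReal.ofReal (Real.pi * (|aa| / t) ^ 2) :=
    calc volume {x | t < ‖f x‖}
        ≤ ∑ i, volume (annulus (c i) (r i) (s i) ∩ ball (c i) (|aa| / t)) :=
          (measure_mono hsub).trans (measure_iUnion_fintype_le _ _)
      _ ≤ volume (ball (0 : EuclideanSpace ℝ (Fin 2)) (|aa| / t)) :=
          sum_measure_annulus_inter_ball_le volume c hchain _
      _ = ENNReal.ofReal (Real.pi * (|aa| / t) ^ 2) := by
          rw [EuclideanSpace.volume_ball_fin_two, ← ENNReal.ofReal_pow (by positivity),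
            ← ENNReal.ofReal_mul (by positivity), mul_comm]
  calc ENNReal.ofReal (t ^ 2) * volume {x | t < ‖f x‖}
      ≤ ENNReal.ofReal (t ^ 2) * ENNReal.ofReal (Real.pi * (|aa| / t) ^ 2) := by gcongr
    _ = ENNReal.ofReal (Real.pi * aa ^ 2) := by
      rw [← ENNReal.ofReal_mul (by positivity), div_pow, sq_abs]
      field_simp

theorem concentric_annuli_distribution_estimate {n k : ℕ}
    (c : Fin n → EuclideanSpace ℝ (Fin 2)) (r s : Fin n → ℝ) (aa : ℝ) (a : Fin n → ℝ)
    (v : Fin n → EuclideanSpace ℝ (Fin 2) → EuclideanSpace ℝ (Fin k))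
    (hr : ∀ i, 0 < r i) (hrs : ∀ i, r i < s i)
    (hchain : ∀ i j : Fin n, i < j → s i ≤ r j)
    (hdisj : Pairwise (Function.onFun Disjoint
      (fun i => {x : EuclideanSpace ℝ (Fin 2) | r i < dist x (c i) ∧ dist x (c i) ≤ s i})))
    (hv : ∀ i, ∀ x ∈ {x : EuclideanSpace ℝ (Fin 2) |
        r i < dist x (c i) ∧ dist x (c i) ≤ s i}, ‖v i x‖ = 1)
    (ha : ∀ i, |a i| ≤ |aa|)
    (f : EuclideanSpace ℝ (Fin 2) → EuclideanSpace ℝ (Fin k))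
    (hf : f = fun x => ∑ i, Set.indicator
        {y : EuclideanSpace ℝ (Fin 2) | r i < dist y (c i) ∧ dist y (c i) ≤ s i}
        (fun y => (a i / dist y (c i)) • v i y) x) :
    ∀ t : ℝ, 0 < t →
      ENNReal.ofReal (t ^ 2) * volume {x | t < ‖f x‖} ≤
        ENNReal.ofReal (Real.pi * aa ^ 2) :=
  concentric_annuli_distribution_estimate_general c r s aa a v hchain hdisj hv ha f hf
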